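/- Let W be a finite Coxeter group and x, y, w ∈ W. If x y⁻¹ ≤ w in the strong Bruhat order, then Θ(x, y, w) is a nonzero polynomial in q whose value at q = 1 equals 1. If x y⁻¹ is not ≤ w, then Θ(x, y, w) = 0. -/

import Mathlib

set_option linter.unusedSectionVars false
set_option maxHeartbeats 1000000


open Polynomial

namespace PaperBase

variable {B : Type*} {W : Type*} [Group W] {M : CoxeterMatrix B} (cs : CoxeterSystem M W)

/-- The strong Bruhat order: `u ≤ w` iff some reduced word for `w` has a sublist that is a
reduced word for `u`. -/
def BruhatLE (u w : W) : Prop :=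
  ∃ ω : List B, cs.IsReduced ω ∧ cs.wordProd ω = w ∧
    ∃ ω' : List B, ω'.Sublist ω ∧ cs.IsReduced ω' ∧ cs.wordProd ω' = u

/-- The strict strong Bruhat order. -/
def BruhatLT (u w : W) : Prop := BruhatLE cs u w ∧ u ≠ w

/-- The right weak Bruhat order: `u ≤_R w` iff `ℓ(w) = ℓ(u) + ℓ(u⁻¹ w)`. -/
def RWeakLE (u w : W) : Prop := cs.length w = cs.length u + cs.length (u⁻¹ * w)

/-- `U_ω ↑ v` along a word `ω`. -/
noncomputable def upLWord (ω : List B) (v : W) : W :=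
  ω.foldr (fun i x => if cs.length x < cs.length (cs.simple i * x) then cs.simple i * x else x) v

/-- `U_ω ↓ v` along a word `ω`. -/
noncomputable def downLWord (ω : List B) (v : W) : W :=
  ω.foldr (fun i x => if cs.length (cs.simple i * x) < cs.length x then cs.simple i * x else x) v

/-- `v ↑ U_ω` along a word `ω`. -/
noncomputable def upRWord (v : W) (ω : List B) : W :=
  ω.foldl (fun x i => if cs.length x < cs.length (x * cs.simple i) then x * cs.simple i else x) v

/-- `v ↓ U_ω` along a word `ω`. -/
noncomputable def downRWord (v : W) (ω : List B) : W :=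
  ω.foldl (fun x i => if cs.length (x * cs.simple i) < cs.length x then x * cs.simple i else x) v

/-- A chosen reduced word for `w`. -/
noncomputable def rword (w : W) : List B := (cs.exists_reduced_word' w).choose

theorem rword_isReduced (w : W) : cs.IsReduced (rword cs w) :=
  (cs.exists_reduced_word' w).choose_spec.1

theorem rword_wordProd (w : W) : cs.wordProd (rword cs w) = w :=
  ((cs.exists_reduced_word' w).choose_spec.2).symm

/-- `U_w ↑ v` for `w : W`, computed along a chosen reduced word for `w`. -/
noncomputable def upL (w v : W) : W := upLWord cs (rword cs w) v

/-- `U_w ↓ v` for `w : W`. -/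
noncomputable def downL (w v : W) : W := downLWord cs (rword cs w) v

/-- `v ↑ U_w` for `w : W`. -/
noncomputable def upR (v w : W) : W := upRWord cs v (rword cs w)

/-- `v ↓ U_w` for `w : W`. -/
noncomputable def downR (v w : W) : W := downRWord cs v (rword cs w)

/-- The Demazure (0-Hecke) product `u ∘ w`. -/
noncomputable def dem (u w : W) : W := upRWord cs u (rword cs w)

/-- Left multiplication by the Hecke algebra generator `T_{s i}` on the free
`ℤ[q]`-module with basis `{T_w}`, realized as `W →₀ ℤ[q]`:
`T_s T_w = T_{sw}` if `sw > w`, and `T_s T_w = (q-1) T_w + q T_{sw}` if `sw < w`. -/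
noncomputable def heckeMulSimple (i : B) (f : W →₀ Polynomial ℤ) : W →₀ Polynomial ℤ :=
  f.sum fun w c =>
    if cs.length w < cs.length (cs.simple i * w)
    then Finsupp.single (cs.simple i * w) c
    else Finsupp.single w ((X - 1) * c) + Finsupp.single (cs.simple i * w) (X * c)

/-- Left multiplication by `T_{π ω}` along a word `ω`. -/
noncomputable def heckeMulWord (ω : List B) (f : W →₀ Polynomial ℤ) : W →₀ Polynomial ℤ :=
  ω.foldr (heckeMulSimple cs) f

/-- The product `T_x T_y` in the Hecke algebra, expanded in the basis `{T_w}`. -/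
noncomputable def TT (x y : W) : W →₀ Polynomial ℤ :=
  heckeMulWord cs (rword cs x) (Finsupp.single y 1)

open Classical in
/-- The linear functional `Λ_w` with `Λ_w (T_y) = q^{ℓ(y)}` if `y ≤ w`, else `0`. -/
noncomputable def Lam (w : W) (f : W →₀ Polynomial ℤ) : Polynomial ℤ :=
  f.sum fun y c => if BruhatLE cs y w then X ^ cs.length y * c else 0

/-- `Θ(x, y, w) = Λ_w (T_x T_{y⁻¹})`. -/
noncomputable def Theta (x y w : W) : Polynomial ℤ := Lam cs w (TT cs x y⁻¹)



open Classical in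
noncomputable def sgn (x y : W) : ℤˣ := if x = y then -1 else 1

theorem sgn_mul_self (x y : W) : sgn x y * sgn x y = 1 := by
  unfold sgn; split_ifs <;> simp

theorem sgn_congr {x y x' y' : W} (h : x = y ↔ x' = y') : sgn x y = sgn x' y' := by
  unfold sgn; split_ifs with h1 h2 <;> tauto

theorem sgn_mul_left_right (u x v c : W) : sgn (u * x * v) c = sgn x (u⁻¹ * c * v⁻¹) := by
  apply sgn_congr
  constructor
  · rintro rfl; group
  · rintro rfl; group

/-- The basic involutive permutation used in the sign representation. -/
noncomputable def sigma (i : B) : Function.End (W × ℤˣ) :=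
  fun p => (cs.simple i * p.1 * cs.simple i, sgn p.1 (cs.simple i) * p.2)

theorem sigma_pair_pow (i j : B) (m : ℕ) (p : W × ℤˣ) :
    ((sigma cs i * sigma cs j) ^ m) p =
      ((cs.simple i * cs.simple j) ^ m * p.1 * (cs.simple j * cs.simple i) ^ m,
        (∏ l ∈ Finset.range (2 * m), sgn p.1 ((cs.simple j * cs.simple i) ^ l * cs.simple j))
          * p.2) := by
  induction m generalizing p with
  | zero => simp; rfl
  | succ m ih =>
    set a := cs.simple i with ha
    set b := cs.simple j with hb
    have hmul : ((sigma cs i * sigma cs j) ^ (m+1)) p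
        = ((sigma cs i * sigma cs j) ^ m) ((sigma cs i * sigma cs j) p) := by
      rw [pow_succ]; rfl
    have hstep : (sigma cs i * sigma cs j) p
        = (a * (b * p.1 * b) * a,
            sgn (b * p.1 * b) a * (sgn p.1 b * p.2)) := rfl
    rw [hmul, hstep, ih]
    have hb2 : b * b = 1 := cs.simple_mul_simple_self j
    have ha2 : a * a = 1 := cs.simple_mul_simple_self i
    have hbinv : b⁻¹ = b := cs.inv_simple j
    have hainv : a⁻¹ = a := cs.inv_simple i
    refine Prod.ext ?_ ?_
    · show (a*b)^m * (a * (b * p.1 * b) * a) * (b*a)^m = (a*b)^(m+1) * p.1 * (b*a)^(m+1)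
      rw [pow_succ (a*b), pow_succ' (b*a)]
      simp only [mul_assoc]
    · show (∏ l ∈ Finset.range (2 * m), sgn (a * (b * p.1 * b) * a) ((b*a) ^ l * b))
          * (sgn (b * p.1 * b) a * (sgn p.1 b * p.2))
        = (∏ l ∈ Finset.range (2 * (m+1)), sgn p.1 ((b*a) ^ l * b)) * p.2
      have e1 : ∀ l : ℕ, sgn (a * (b * p.1 * b) * a) ((b*a) ^ l * b)
          = sgn p.1 ((b*a) ^ (l+2) * b) := by
        intro l
        rw [show a * (b * p.1 * b) * a = (a*b) * p.1 * (b*a) by group]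
        rw [sgn_mul_left_right]
        apply sgn_congr
        have : (a*b)⁻¹ * ((b*a) ^ l * b) * (b*a)⁻¹ = (b*a) ^ (l+2) * b := by
          rw [mul_inv_rev, mul_inv_rev, hbinv, hainv]
          rw [show (b*a)^(l+2) = (b*a) * (b*a)^l * (b*a) by rw [show l + 2 = 1 + l + 1 by omega, pow_succ, pow_add, pow_one]]
          group
        rw [this]
      have e2 : sgn (b * p.1 * b) a = sgn p.1 ((b*a) ^ 1 * b) := by
        rw [sgn_mul_left_right, hbinv, pow_one]
      have e3 : sgn p.1 b = sgn p.1 ((b*a) ^ 0 * b) := by rw [pow_zero, one_mul]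
      calc (∏ l ∈ Finset.range (2 * m), sgn (a * (b * p.1 * b) * a) ((b*a) ^ l * b))
          * (sgn (b * p.1 * b) a * (sgn p.1 b * p.2))
          = ((∏ l ∈ Finset.range (2 * m), sgn p.1 ((b*a) ^ (l+2) * b))
              * (sgn p.1 ((b*a) ^ 1 * b) * sgn p.1 ((b*a) ^ 0 * b))) * p.2 := by
            simp only [e1, e2, e3]; simp [mul_assoc]
        _ = (∏ l ∈ Finset.range (2 * (m+1)), sgn p.1 ((b*a) ^ l * b)) * p.2 := by
            congr 1
            rw [show 2 * (m+1) = 2*m + 1 + 1 by ring]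
            rw [Finset.prod_range_succ', Finset.prod_range_succ']
            simp [mul_assoc]

theorem sigma_liftable : M.IsLiftable (fun i => sigma cs i) := by
  intro i j
  funext p
  rw [sigma_pair_pow]
  rw [cs.simple_mul_simple_pow i j, cs.simple_mul_simple_pow' i j]
  have : (∏ l ∈ Finset.range (2 * M i j), sgn p.1 ((cs.simple j * cs.simple i) ^ l * cs.simple j)) = 1 := by
    rw [two_mul, Finset.prod_range_add]
    have : ∀ l : ℕ, sgn p.1 ((cs.simple j * cs.simple i) ^ (M i j + l) * cs.simple j)
        = sgn p.1 ((cs.simple j * cs.simple i) ^ l * cs.simple j) := by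
      intro l
      rw [pow_add, cs.simple_mul_simple_pow' i j, one_mul]
    simp only [this]
    rw [← Finset.prod_mul_distrib]
    exact Finset.prod_eq_one (fun l _ => sgn_mul_self _ _)
  rw [this, one_mul]
  show (p.1 * 1, 1 * p.2) = p
  simp


/-- The sign representation `φ : W →* End (W × ℤˣ)`. -/
noncomputable def phi : W →* Function.End (W × ℤˣ) :=
  cs.lift ⟨fun i => sigma cs i, sigma_liftable cs⟩

theorem phi_simple (i : B) : phi cs (cs.simple i) = sigma cs i :=
  cs.lift_apply_simple (sigma_liftable cs) i

/-- The sign cocycle along a word. -/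
noncomputable def eta : List B → W → ℤˣ
  | [], _ => 1
  | i :: ω, x => sgn x (cs.simple i) * eta ω (cs.simple i * x * cs.simple i)

@[simp] theorem eta_nil (x : W) : eta cs [] x = 1 := rfl

theorem eta_cons (i : B) (ω : List B) (x : W) :
    eta cs (i :: ω) x = sgn x (cs.simple i) * eta cs ω (cs.simple i * x * cs.simple i) := rfl

theorem phi_inv_wordProd (ω : List B) (p : W × ℤˣ) :
    phi cs (cs.wordProd ω)⁻¹ p = ((cs.wordProd ω)⁻¹ * p.1 * cs.wordProd ω, eta cs ω p.1 * p.2) := by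
  induction ω generalizing p with
  | nil =>
    rw [cs.wordProd_nil, inv_one, map_one]
    show p = (1 * p.1 * 1, eta cs [] p.1 * p.2)
    simp
  | cons i ω ih =>
    have h1 : (cs.wordProd (i :: ω))⁻¹ = (cs.wordProd ω)⁻¹ * cs.simple i := by
      rw [cs.wordProd_cons, mul_inv_rev, cs.inv_simple]
    rw [h1, map_mul]
    have h2 : (phi cs (cs.wordProd ω)⁻¹ * phi cs (cs.simple i)) p
        = phi cs (cs.wordProd ω)⁻¹ (phi cs (cs.simple i) p) := rfl
    rw [h2, phi_simple]
    have h3 : sigma cs i p = (cs.simple i * p.1 * cs.simple i, sgn p.1 (cs.simple i) * p.2) := rfl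
    rw [h3, ih]
    rw [eta_cons, cs.wordProd_cons]
    refine Prod.ext ?_ ?_ <;> simp [mul_assoc, mul_comm, mul_left_comm]

/-- The cocycle only depends on the word product. -/
theorem eta_eq_of_wordProd_eq {ω ω' : List B} (h : cs.wordProd ω = cs.wordProd ω') (x : W) :
    eta cs ω x = eta cs ω' x := by
  have h1 := phi_inv_wordProd cs ω (x, 1)
  have h2 := phi_inv_wordProd cs ω' (x, 1)
  rw [h] at h1
  rw [h1] at h2
  have := congrArg Prod.snd h2
  simpa using this

theorem eta_append (α β : List B) (x : W) :
    eta cs (α ++ β) x = eta cs α x * eta cs β ((cs.wordProd α)⁻¹ * x * cs.wordProd α) := by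
  induction α generalizing x with
  | nil => simp
  | cons a α ih =>
    have harg : (cs.wordProd α)⁻¹ * (cs.simple a * x * cs.simple a) * cs.wordProd α
        = (cs.wordProd (a :: α))⁻¹ * x * cs.wordProd (a :: α) := by
      rw [cs.wordProd_cons, mul_inv_rev, cs.inv_simple]
      simp [mul_assoc]
    rw [List.cons_append, eta_cons, ih, eta_cons, harg]
    exact (mul_assoc _ _ _).symm

theorem eta_neg_mem {ω : List B} {x : W} (h : eta cs ω x = -1) : x ∈ cs.leftInvSeq ω := by
  induction ω generalizing x with
  | nil => simp at h
  | cons i ω ih =>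
    rw [eta_cons] at h
    by_cases hx : x = cs.simple i
    · rw [CoxeterSystem.leftInvSeq]
      exact hx ▸ List.mem_cons_self
    · rw [show sgn x (cs.simple i) = 1 by unfold sgn; rw [if_neg hx], one_mul] at h
      have hmem := ih h
      rw [CoxeterSystem.leftInvSeq]
      refine List.mem_cons_of_mem _ ?_
      refine List.mem_map.mpr ⟨cs.simple i * x * cs.simple i, hmem, ?_⟩
      show cs.simple i * (cs.simple i * x * cs.simple i) * (cs.simple i)⁻¹ = x
      rw [cs.inv_simple]
      calc cs.simple i * (cs.simple i * x * cs.simple i) * cs.simple i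
          = (cs.simple i * cs.simple i) * x * (cs.simple i * cs.simple i) := by simp [mul_assoc]
        _ = x := by rw [cs.simple_mul_simple_self]; simp

theorem eta_eq_one_or_neg_one (ω : List B) (x : W) : eta cs ω x = 1 ∨ eta cs ω x = -1 :=
  Int.units_eq_one_or _

theorem eta_eq_one_of_reduced {ω : List B} (hω : cs.IsReduced ω) {t : W}
    (h : ¬ cs.length (t * cs.wordProd ω) < cs.length (cs.wordProd ω)) : eta cs ω t = 1 := by
  rcases eta_eq_one_or_neg_one cs ω t with h1 | h1
  · exact h1
  · exact absurd (cs.isLeftInversion_of_mem_leftInvSeq hω (eta_neg_mem cs h1)).2 h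

theorem eta_palindrome (ν : List B) (l : B) :
    eta cs (ν ++ [l] ++ ν.reverse) (cs.wordProd ν * cs.simple l * (cs.wordProd ν)⁻¹) = -1 := by
  induction ν with
  | nil =>
    simp only [List.nil_append, List.reverse_nil, List.append_nil, cs.wordProd_nil]
    rw [eta_cons]
    simp [sgn]
  | cons a ν ih =>
    have hwp : cs.wordProd (ν ++ [l] ++ ν.reverse)
        = cs.wordProd ν * cs.simple l * (cs.wordProd ν)⁻¹ := by
      rw [cs.wordProd_append, cs.wordProd_append, cs.wordProd_reverse, cs.wordProd_singleton]
    set t' := cs.wordProd ν * cs.simple l * (cs.wordProd ν)⁻¹ with ht'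
    have hlist : (a :: ν) ++ [l] ++ (a :: ν).reverse
        = a :: ((ν ++ [l] ++ ν.reverse) ++ [a]) := by simp
    have htt : cs.wordProd (a :: ν) * cs.simple l * (cs.wordProd (a :: ν))⁻¹
        = cs.simple a * t' * cs.simple a := by
      rw [cs.wordProd_cons, mul_inv_rev, cs.inv_simple, ht']
      simp [mul_assoc]
    rw [hlist, htt, eta_cons]
    have hconj : cs.simple a * (cs.simple a * t' * cs.simple a) * cs.simple a = t' := by
      calc cs.simple a * (cs.simple a * t' * cs.simple a) * cs.simple a
          = (cs.simple a * cs.simple a) * t' * (cs.simple a * cs.simple a) := by simp [mul_assoc]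
        _ = t' := by rw [cs.simple_mul_simple_self]; simp
    rw [hconj, eta_append, hwp]
    have hconj2 : t'⁻¹ * t' * t' = t' := by group
    rw [hconj2]
    have heta_a : eta cs [a] t' = sgn t' (cs.simple a) := by
      rw [eta_cons]; simp
    rw [heta_a, ih]
    have hsgn : sgn (cs.simple a * t' * cs.simple a) (cs.simple a) = sgn t' (cs.simple a) := by
      apply sgn_congr
      constructor
      · intro h
        have h2 : cs.simple a * (cs.simple a * t' * cs.simple a) * cs.simple a
            = cs.simple a * cs.simple a * cs.simple a := by rw [h]
        rw [hconj, cs.simple_mul_simple_self, one_mul] at h2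
        exact h2
      · intro h
        rw [h, cs.simple_mul_simple_self, one_mul]
    rw [hsgn]
    calc sgn t' (cs.simple a) * (-1 * sgn t' (cs.simple a))
        = -(sgn t' (cs.simple a) * sgn t' (cs.simple a)) := by
          rw [neg_one_mul, mul_neg]
      _ = -1 := by rw [sgn_mul_self]

/-- `η(ω, t) = -1` whenever `t` is a left inversion of `π ω`. -/
theorem eta_neg_of_inversion {ω : List B} {t : W} (ht : cs.IsReflection t)
    (h : cs.length (t * cs.wordProd ω) < cs.length (cs.wordProd ω)) : eta cs ω t = -1 := by
  obtain ⟨v, l, htdef⟩ := id ht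
  obtain ⟨ν, hνred, hν⟩ := cs.exists_reduced_word' v
  obtain ⟨ρ, hρred, hρ⟩ := cs.exists_reduced_word' (t * cs.wordProd ω)
  have htt : t * t = 1 := ht.mul_self
  have hω0 : cs.wordProd ((ν ++ [l] ++ ν.reverse) ++ ρ) = cs.wordProd ω := by
    rw [cs.wordProd_append, cs.wordProd_append, cs.wordProd_append, cs.wordProd_reverse,
      cs.wordProd_singleton, ← hν, ← hρ, ← htdef, ← mul_assoc, htt, one_mul]
  rw [← eta_eq_of_wordProd_eq cs hω0 t]
  rw [eta_append]
  have hpal : cs.wordProd (ν ++ [l] ++ ν.reverse) = t := by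
    rw [cs.wordProd_append, cs.wordProd_append, cs.wordProd_reverse, cs.wordProd_singleton,
      ← hν, ← htdef]
  rw [hpal]
  have hconj : t⁻¹ * t * t = t := by group
  rw [hconj]
  have h1 : eta cs (ν ++ [l] ++ ν.reverse) t = -1 := by
    have := eta_palindrome cs ν l
    rwa [← hν, ← htdef] at this
  have h2 : eta cs ρ t = 1 := by
    apply eta_eq_one_of_reduced cs hρred
    rw [← hρ, ← mul_assoc, htt, one_mul]
    omega
  rw [h1, h2, mul_one]

/-- Strong exchange property. -/
theorem strong_exchange (ω : List B) {t : W} (ht : cs.IsReflection t)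
    (h : cs.length (t * cs.wordProd ω) < cs.length (cs.wordProd ω)) :
    ∃ μ : List B, μ.Sublist ω ∧ μ.length + 1 = ω.length ∧
      cs.wordProd μ = t * cs.wordProd ω := by
  have hmem : t ∈ cs.leftInvSeq ω := by
    rcases eta_eq_one_or_neg_one cs ω t with h1 | h1
    · exact absurd (h1 ▸ eta_neg_of_inversion cs ht h) (by decide)
    · exact eta_neg_mem cs h1
  obtain ⟨j, hj, hget⟩ := List.mem_iff_getElem.mp hmem
  have hjlen : j < ω.length := by
    rwa [cs.length_leftInvSeq] at hj
  refine ⟨ω.eraseIdx j, List.eraseIdx_sublist ω j, List.length_eraseIdx_add_one hjlen, ?_⟩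
  have := cs.getD_leftInvSeq_mul_wordProd ω j
  rw [List.getD_eq_getElem _ _ hj, hget] at this
  exact this.symm


/-- One step up in the Bruhat order: multiply by a reflection, increasing length. -/
def bstep (a b : W) : Prop :=
  ∃ t, cs.IsReflection t ∧ b = t * a ∧ cs.length a < cs.length b

/-- The Bruhat order as chains of reflections. -/
def ble (a b : W) : Prop := Relation.ReflTransGen (bstep cs) a b

theorem ble_refl (a : W) : ble cs a a := Relation.ReflTransGen.refl

/-- Any word contains a reduced sublist with the same product. -/
theorem exists_reduced_sublist (ω : List B) :
    ∃ μ : List B, μ.Sublist ω ∧ cs.IsReduced μ ∧ cs.wordProd μ = cs.wordProd ω := by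
  induction ω with
  | nil => exact ⟨[], List.Sublist.refl _, by simp [CoxeterSystem.IsReduced], rfl⟩
  | cons i ω ih =>
    obtain ⟨μ, hsub, hred, hprod⟩ := ih
    rcases cs.length_simple_mul (cs.wordProd μ) i with h | h
    · refine ⟨i :: μ, List.cons_sublist_cons.mpr hsub, ?_, ?_⟩
      · show cs.length (cs.wordProd (i :: μ)) = (i :: μ).length
        rw [cs.wordProd_cons, h, hred]
        simp
      · rw [cs.wordProd_cons, cs.wordProd_cons, hprod]
    · have hlt : cs.length (cs.simple i * cs.wordProd μ) < cs.length (cs.wordProd μ) := by omega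
      obtain ⟨κ, hκsub, hκlen, hκprod⟩ :=
        strong_exchange cs μ (cs.isReflection_simple i) hlt
      refine ⟨κ, (hκsub.trans hsub).trans (List.sublist_cons_self i ω), ?_, ?_⟩
      · show cs.length (cs.wordProd κ) = κ.length
        rw [hκprod]
        have : cs.length (cs.wordProd μ) = μ.length := hred
        omega
      · rw [hκprod, hprod, cs.wordProd_cons]

/-- Subword property: any chain-below element appears as a reduced sublist of
any reduced word. -/
theorem chain_subword : ∀ (n : ℕ) (u z : W), cs.length z ≤ n → ble cs u z →
    ∀ μ : List B, cs.IsReduced μ → cs.wordProd μ = z →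
    ∃ ν : List B, ν.Sublist μ ∧ cs.IsReduced ν ∧ cs.wordProd ν = u := by
  intro n
  induction n with
  | zero =>
    intro u z hz hble μ hred hprod
    rcases Relation.ReflTransGen.cases_tail hble with rfl | ⟨c, _, t, _, hzc, hlen⟩
    · exact ⟨μ, List.Sublist.refl _, hred, hprod⟩
    · omega
  | succ n ih =>
    intro u z hz hble μ hred hprod
    rcases Relation.ReflTransGen.cases_tail hble with rfl | ⟨c, hc, t, hrefl, hzc, hlen⟩
    · exact ⟨μ, List.Sublist.refl _, hred, hprod⟩
    · have htz : t * z = c := by rw [hzc, ← mul_assoc, hrefl.mul_self, one_mul]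
      have hlt : cs.length (t * cs.wordProd μ) < cs.length (cs.wordProd μ) := by
        rw [hprod, htz]; omega
      obtain ⟨κ, hκsub, _, hκprod⟩ := strong_exchange cs μ hrefl hlt
      obtain ⟨ν₁, hν₁sub, hν₁red, hν₁prod⟩ := exists_reduced_sublist cs κ
      have hν₁c : cs.wordProd ν₁ = c := by rw [hν₁prod, hκprod, hprod, htz]
      have hcn : cs.length c ≤ n := by omega
      obtain ⟨ν, hνsub, hνred, hνprod⟩ := ih u c hcn hc ν₁ hν₁red hν₁c
      exact ⟨ν, (hνsub.trans hν₁sub).trans hκsub, hνred, hνprod⟩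

/-- `ble` composed with `BruhatLE` gives `BruhatLE`. -/
theorem ble_trans_bruhatLE {m z w : W} (h1 : ble cs m z) (h2 : BruhatLE cs z w) :
    BruhatLE cs m w := by
  obtain ⟨ρ, hρred, hρprod, μ, hμsub, hμred, hμprod⟩ := h2
  obtain ⟨ν, hνsub, hνred, hνprod⟩ :=
    chain_subword cs (cs.length z) m z le_rfl h1 μ hμred hμprod
  exact ⟨ρ, hρred, hρprod, ν, hνsub.trans hμsub, hνred, hνprod⟩

/-- The key length lemma: if `ℓ(xs) > ℓ(x)` and `ℓ(su) < ℓ(u)` then `ℓ(xsu) < ℓ(xu)`. -/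
theorem key_length {x u : W} {j : B} (hx : cs.length (x * cs.simple j) = cs.length x + 1)
    (hu : cs.length (cs.simple j * u) < cs.length u) :
    cs.length (x * cs.simple j * u) < cs.length (x * u) := by
  obtain ⟨ρx, hρxred, hρx⟩ := cs.exists_reduced_word' x
  obtain ⟨ρu, hρured, hρu⟩ := cs.exists_reduced_word' u
  set t := x * cs.simple j * x⁻¹ with htdef
  have hrefl : cs.IsReflection t := ⟨x, j, rfl⟩
  have hta : t * (x * u) = x * cs.simple j * u := by
    rw [htdef]; simp [mul_assoc]
  have hprod : cs.wordProd (ρx ++ ρu) = x * u := by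
    rw [cs.wordProd_append, ← hρx, ← hρu]
  -- compute the cocycle
  have heta : eta cs (ρx ++ ρu) t = -1 := by
    rw [eta_append]
    have harg : (cs.wordProd ρx)⁻¹ * t * cs.wordProd ρx = cs.simple j := by
      rw [← hρx, htdef]; simp [mul_assoc]
    rw [harg]
    have h1 : eta cs ρx t = 1 := by
      apply eta_eq_one_of_reduced cs hρxred
      rw [← hρx]
      have : t * x = x * cs.simple j := by rw [htdef]; simp [mul_assoc]
      rw [this, hx]
      omega
    have h2 : eta cs ρu (cs.simple j) = -1 := by
      apply eta_neg_of_inversion cs (cs.isReflection_simple j)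
      rw [← hρu]; exact hu
    rw [h1, h2, one_mul]
  -- transfer to a reduced word of x * u
  obtain ⟨ρ, hρred, hρ⟩ := cs.exists_reduced_word' (x * u)
  have heq : eta cs ρ t = -1 := by
    have e := eta_eq_of_wordProd_eq cs
      (show cs.wordProd (ρx ++ ρu) = cs.wordProd ρ by rw [hprod, hρ]) t
    rw [← e]; exact heta
  have hmem := eta_neg_mem cs heq
  have hinv := cs.isLeftInversion_of_mem_leftInvSeq hρred hmem
  rw [← hta, hρ]
  exact hinv.2


theorem hMS_add (i : B) (f g : W →₀ Polynomial ℤ) :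
    heckeMulSimple cs i (f + g) = heckeMulSimple cs i f + heckeMulSimple cs i g := by
  unfold heckeMulSimple
  apply Finsupp.sum_add_index'
  · intro a
    split_ifs <;> simp
  · intro a b₁ b₂
    split_ifs <;> simp [mul_add] <;> abel

theorem hMS_single (i : B) (u : W) (c : Polynomial ℤ) :
    heckeMulSimple cs i (Finsupp.single u c) =
      if cs.length u < cs.length (cs.simple i * u)
      then Finsupp.single (cs.simple i * u) c
      else Finsupp.single u ((X - 1) * c) + Finsupp.single (cs.simple i * u) (X * c) := by
  unfold heckeMulSimple
  apply Finsupp.sum_single_index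
  split_ifs <;> simp

theorem hMS_smul (i : B) (c : Polynomial ℤ) (f : W →₀ Polynomial ℤ) :
    heckeMulSimple cs i (c • f) = c • heckeMulSimple cs i f := by
  induction f using Finsupp.induction with
  | zero => simp [heckeMulSimple]
  | single_add a b f _ _ ih =>
    rw [smul_add, hMS_add, hMS_add, smul_add, ih]
    congr 1
    rw [Finsupp.smul_single, smul_eq_mul, hMS_single, hMS_single]
    split_ifs
    · rw [Finsupp.smul_single, smul_eq_mul]
    · rw [smul_add, Finsupp.smul_single, Finsupp.smul_single, smul_eq_mul, smul_eq_mul,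
        show (X - 1 : Polynomial ℤ) * (c * b) = c * ((X - 1) * b) by ring,
        show (X : Polynomial ℤ) * (c * b) = c * (X * b) by ring]

theorem hMW_add (ω : List B) (f g : W →₀ Polynomial ℤ) :
    heckeMulWord cs ω (f + g) = heckeMulWord cs ω f + heckeMulWord cs ω g := by
  induction ω with
  | nil => rfl
  | cons i ω ih =>
    show heckeMulSimple cs i (heckeMulWord cs ω (f + g)) = _
    rw [ih, hMS_add]; rfl

theorem hMW_smul (ω : List B) (c : Polynomial ℤ) (f : W →₀ Polynomial ℤ) :
    heckeMulWord cs ω (c • f) = c • heckeMulWord cs ω f := by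
  induction ω with
  | nil => rfl
  | cons i ω ih =>
    show heckeMulSimple cs i (heckeMulWord cs ω (c • f)) = _
    rw [ih, hMS_smul]; rfl

theorem hMW_append (α β : List B) (f : W →₀ Polynomial ℤ) :
    heckeMulWord cs (α ++ β) f = heckeMulWord cs α (heckeMulWord cs β f) :=
  List.foldr_append

/-- The support lemma: every element in the support of `T_{π ω} T_u` is `≥ (π ω) u`
in the Bruhat order. -/
theorem support_lemma (ω : List B) (hred : cs.IsReduced ω) (u z : W)
    (hz : heckeMulWord cs ω (Finsupp.single u 1) z ≠ 0) :
    ble cs (cs.wordProd ω * u) z := by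
  induction ω using List.reverseRecOn generalizing u with
  | nil =>
    have : Finsupp.single u (1 : Polynomial ℤ) z ≠ 0 := hz
    have hzu : z = u := by
      have h2 := Finsupp.support_single_subset (Finsupp.mem_support_iff.mpr this)
      simpa using h2
    rw [cs.wordProd_nil, one_mul, hzu]
    exact ble_refl cs u
  | append_singleton α j ih =>
    -- basic length facts
    have h1 : cs.length (cs.wordProd (α ++ [j])) = α.length + 1 := by
      have := hred
      unfold CoxeterSystem.IsReduced at this
      rw [this]; simp
    have hsplit : cs.wordProd (α ++ [j]) = cs.wordProd α * cs.simple j := by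
      rw [cs.wordProd_append, cs.wordProd_singleton]
    have h2 : cs.length (cs.wordProd α * cs.simple j) ≤ cs.length (cs.wordProd α) + 1 := by
      have := cs.length_mul_le (cs.wordProd α) (cs.simple j)
      rwa [cs.length_simple] at this
    have h3 : cs.length (cs.wordProd α) ≤ α.length := cs.length_wordProd_le α
    have hxred : cs.IsReduced α := by
      show cs.length (cs.wordProd α) = α.length
      rw [hsplit] at h1
      omega
    have hxs : cs.length (cs.wordProd α * cs.simple j) = cs.length (cs.wordProd α) + 1 := by
      rw [hsplit] at h1
      omega
    rw [hMW_append] at hz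
    have hone : heckeMulWord cs [j] (Finsupp.single u 1) = heckeMulSimple cs j (Finsupp.single u 1) := rfl
    rw [hone, hMS_single] at hz
    by_cases hup : cs.length u < cs.length (cs.simple j * u)
    · rw [if_pos hup] at hz
      have := ih hxred (cs.simple j * u) hz
      rw [hsplit, mul_assoc]
      exact this
    · rw [if_neg hup] at hz
      have hdown : cs.length (cs.simple j * u) < cs.length u := by
        have hne := (cs.isReflection_simple j).length_mul_right_ne u
        omega
      rw [show Finsupp.single u ((X - 1 : Polynomial ℤ) * 1)
            + Finsupp.single (cs.simple j * u) ((X : Polynomial ℤ) * 1)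
          = (X - 1 : Polynomial ℤ) • Finsupp.single u (1 : Polynomial ℤ)
            + (X : Polynomial ℤ) • Finsupp.single (cs.simple j * u) (1 : Polynomial ℤ) by
        rw [Finsupp.smul_single, Finsupp.smul_single, smul_eq_mul, smul_eq_mul]] at hz
      rw [hMW_add, hMW_smul, hMW_smul] at hz
      rw [Finsupp.add_apply, Finsupp.smul_apply, Finsupp.smul_apply] at hz
      by_cases hB : heckeMulWord cs α (Finsupp.single (cs.simple j * u) 1) z = 0
      · have hA : heckeMulWord cs α (Finsupp.single u 1) z ≠ 0 := by
          intro hA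
          rw [hA, hB, smul_zero, smul_zero, add_zero] at hz
          exact hz rfl
        have hm1 := ih hxred u hA
        -- step from (π α) s_j u  up to (π α) u
        have hlen := key_length cs hxs hdown
        have hstep : bstep cs (cs.wordProd (α ++ [j]) * u) (cs.wordProd α * u) := by
          refine ⟨cs.wordProd α * cs.simple j * (cs.wordProd α)⁻¹, ⟨cs.wordProd α, j, rfl⟩, ?_, ?_⟩
          · rw [hsplit]; simp [mul_assoc]
          · rw [hsplit]
            exact hlen
        exact Relation.ReflTransGen.head hstep hm1
      · have := ih hxred (cs.simple j * u) hB
        rw [hsplit, mul_assoc]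
        exact this


/-- Reduction of coefficients at `q = 1`. -/
noncomputable def evF (f : W →₀ Polynomial ℤ) : W →₀ ℤ :=
  Finsupp.mapRange (Polynomial.eval 1) (by simp) f

theorem evF_apply (f : W →₀ Polynomial ℤ) (z : W) : evF f z = (f z).eval 1 := rfl

theorem evF_add (f g : W →₀ Polynomial ℤ) : evF (f + g) = evF f + evF g :=
  Finsupp.mapRange_add (by simp) f g

theorem evF_single (a : W) (c : Polynomial ℤ) :
    evF (Finsupp.single a c) = Finsupp.single a (c.eval 1) :=
  Finsupp.mapRange_single

theorem evF_hMS (i : B) (f : W →₀ Polynomial ℤ) :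
    evF (heckeMulSimple cs i f) = Finsupp.mapDomain (fun v => cs.simple i * v) (evF f) := by
  induction f using Finsupp.induction with
  | zero => simp [evF, heckeMulSimple]
  | single_add a b f _ _ ih =>
    rw [hMS_add, evF_add, evF_add, Finsupp.mapDomain_add, ih]
    congr 1
    rw [hMS_single]
    split_ifs
    · rw [evF_single, evF_single, Finsupp.mapDomain_single]
    · rw [evF_add, evF_single, evF_single, evF_single, Finsupp.mapDomain_single]
      simp only [Polynomial.eval_mul, Polynomial.eval_sub, Polynomial.eval_X, Polynomial.eval_one,
        sub_self, zero_mul, Finsupp.single_zero, zero_add, one_mul]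

theorem evF_hMW (ω : List B) (u : W) :
    evF (heckeMulWord cs ω (Finsupp.single u 1)) = Finsupp.single (cs.wordProd ω * u) 1 := by
  induction ω with
  | nil =>
    rw [cs.wordProd_nil, one_mul]
    show evF (Finsupp.single u 1) = _
    rw [evF_single]
    simp
  | cons i ω ih =>
    show evF (heckeMulSimple cs i (heckeMulWord cs ω (Finsupp.single u 1))) = _
    rw [evF_hMS, ih, Finsupp.mapDomain_single, cs.wordProd_cons, mul_assoc]

theorem TT_eval_one (x y : W) (z : W) :
    ((TT cs x y⁻¹) z).eval 1 = (Finsupp.single (x * y⁻¹) (1 : ℤ)) z := by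
  have h := evF_hMW cs (rword cs x) y⁻¹
  rw [rword_wordProd] at h
  have := congrArg (fun g => g z) h
  simpa [evF_apply, TT] using this

theorem theta_vanish (x y w : W) (h : ¬BruhatLE cs (x * y⁻¹) w) : Theta cs x y w = 0 := by
  unfold Theta Lam
  rw [Finsupp.sum]
  apply Finset.sum_eq_zero
  intro z hzsupp
  have hz : TT cs x y⁻¹ z ≠ 0 := Finsupp.mem_support_iff.mp hzsupp
  have hble : ble cs (x * y⁻¹) z := by
    have := support_lemma cs (rword cs x) (rword_isReduced cs x) y⁻¹ z hz
    rwa [rword_wordProd] at this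
  have hcond : ¬ BruhatLE cs z w := fun hzw => h (ble_trans_bruhatLE cs hble hzw)
  rw [if_neg hcond]

theorem theta_eval_one (x y w : W) (h : BruhatLE cs (x * y⁻¹) w) :
    (Theta cs x y w).eval 1 = 1 := by
  classical
  unfold Theta Lam
  rw [Finsupp.sum, Polynomial.eval_finset_sum]
  have hterm : ∀ z, ((if BruhatLE cs z w then (X : Polynomial ℤ) ^ cs.length z * TT cs x y⁻¹ z
      else 0).eval 1) = if BruhatLE cs z w then (Finsupp.single (x * y⁻¹) (1 : ℤ)) z else 0 := by
    intro z
    rw [apply_ite (Polynomial.eval 1)]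
    simp only [Polynomial.eval_mul, Polynomial.eval_pow, Polynomial.eval_X, one_pow, one_mul,
      Polynomial.eval_zero]
    rw [TT_eval_one]
  simp only [hterm]
  have hmem : x * y⁻¹ ∈ (TT cs x y⁻¹).support := by
    rw [Finsupp.mem_support_iff]
    intro h0
    have := TT_eval_one cs x y (x * y⁻¹)
    rw [h0] at this
    simp at this
  rw [Finset.sum_eq_single_of_mem (x * y⁻¹) hmem]
  · rw [if_pos h, Finsupp.single_eq_same]
  · intro z _ hne
    rw [Finsupp.single_eq_of_ne' (Ne.symm hne)]
    split_ifs <;> rfl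


/-- If `xy⁻¹ ≤ w` then `Θ(x,y,w)` is a nonzero polynomial with value `1` at `q = 1`;
if `xy⁻¹ ≰ w` then `Θ(x,y,w) = 0`. -/
theorem stmt14 [Finite W] (x y w : W) :
    (BruhatLE cs (x * y⁻¹) w → Theta cs x y w ≠ 0 ∧ (Theta cs x y w).eval 1 = 1) ∧
    (¬BruhatLE cs (x * y⁻¹) w → Theta cs x y w = 0) := by
  constructor
  · intro h
    have he := theta_eval_one cs x y w h
    refine ⟨?_, he⟩
    intro h0
    rw [h0] at he
    simp at he
  · exact theta_vanish cs x y w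

end PaperBase
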